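/- arXiv:1504.00615 — 2 statements merged into one kernel-verified Lean document; each statement's English description precedes it below -/
import Mathlib

section
/- Let p(z) = a_0 + a_1 z + ... + a_n z^n be a self-inversive polynomial of degree n and let l be a natural number with 2l < n satisfying |a_{n-l}| > (1/2)·(n/(n-2l))·Σ_{k=0, k∉{l, n-l}}^{n} |a_k|. Then the formal derivative p'(z) = a_1 + 2a_2 z + ... + n·a_n·z^{n-1} has no roots on the complex unit circle U; moreover, p' has exactly n-l-1 roots, counted with multiplicity, in the open unit disk {z ∈ ℂ : |z| < 1}. -/
open Polynomial Complex Metric Finset Real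

/-!
The coefficients of `p'` are `(k + 1) a_{k+1}`, and `|a_{n-k}| = |a_k|` gives
`∑ k |a_k| = (n/2) ∑ |a_k|`; the hypothesis on `a_{n-l}` then says exactly that the coefficient
`(n - l) a_{n-l}` of `z^{n-l-1}` in `p'` dominates the sum of the moduli of all the others.
On the unit circle `p'` is therefore closer to `(n - l) a_{n-l} z^{n-l-1}` than that monomial is
to `0`, so `p'` does not vanish there, and by Rouché's theorem it has as many zeros in the disk
as the monomial, namely `n - l - 1`. Rouché's theorem for polynomials is proved via the argument
principle: `∮ p'/p` counts the roots inside the circle, and when `|p - q| < |q|` on the circle,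
`p'/p - q'/q` is the derivative of `log (p/q)` there.
-/

section CircleIntegral

variable {ι E : Type*} [NormedAddCommGroup E] {c : ℂ} {R : ℝ}

theorem CircleIntegrable.multiset_sum (s : Multiset ι) {f : ι → ℂ → E}
    (hf : ∀ i ∈ s, CircleIntegrable (f i) c R) :
    CircleIntegrable (fun z => (s.map fun i => f i z).sum) c R := by
  induction s using Multiset.induction_on with
  | empty => simp
  | cons i s ih =>
    simp only [Multiset.map_cons, Multiset.sum_cons]
    exact (hf i (s.mem_cons_self i)).add (ih fun j hj => hf j (Multiset.mem_cons_of_mem hj))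

theorem circleIntegral.integral_multiset_sum [NormedSpace ℂ E] (s : Multiset ι)
    {f : ι → ℂ → E} (hf : ∀ i ∈ s, CircleIntegrable (f i) c R) :
    (∮ z in C(c, R), (s.map fun i => f i z).sum) =
      (s.map fun i => ∮ z in C(c, R), f i z).sum := by
  induction s using Multiset.induction_on with
  | empty => simp [circleIntegral]
  | cons i s ih =>
    have hs : ∀ j ∈ s, CircleIntegrable (f j) c R := fun j hj =>
      hf j (Multiset.mem_cons_of_mem hj)
    simp only [Multiset.map_cons, Multiset.sum_cons]
    rw [circleIntegral.integral_add (hf i (s.mem_cons_self i)) (.multiset_sum s hs), ih hs]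

theorem circleIntegral.integral_sub_inv_of_notMem_closedBall (hR : 0 ≤ R) {w : ℂ}
    (hw : w ∉ closedBall c R) : (∮ z in C(c, R), (z - w)⁻¹) = 0 := by
  refine DiffContOnCl.circleIntegral_eq_zero hR (DifferentiableOn.diffContOnCl ?_)
  refine DifferentiableOn.mono (fun z hz => ?_) closure_ball_subset_closedBall
  exact ((differentiableAt_id.sub_const w).inv
    (sub_ne_zero.2 (ne_of_mem_of_not_mem hz hw))).differentiableWithinAt

theorem circleIntegral.integral_sub_inv_of_notMem_sphere (hR : 0 ≤ R) {w : ℂ}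
    (hw : w ∉ sphere c R) [Decidable (w ∈ ball c R)] :
    (∮ z in C(c, R), (z - w)⁻¹) = if w ∈ ball c R then 2 * π * I else 0 := by
  split_ifs with hwb
  · exact integral_sub_inv_of_mem_ball hwb
  · refine integral_sub_inv_of_notMem_closedBall hR fun hwc => ?_
    rw [← ball_union_sphere] at hwc
    exact hwc.elim hwb hw

end CircleIntegral

theorem ne_zero_and_ne_zero_of_norm_sub_lt {E : Type*} [NormedAddCommGroup E] {x y : E}
    (h : ‖x - y‖ < ‖y‖) : x ≠ 0 ∧ y ≠ 0 :=
  ⟨by rintro rfl; simp at h, norm_pos_iff.1 ((norm_nonneg _).trans_lt h)⟩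

theorem Multiset.sum_map_ite_zero {α R : Type*} [NonAssocSemiring R] (s : Multiset α)
    (p : α → Prop) [DecidablePred p] (x : R) :
    (s.map fun a => if p a then x else 0).sum = (s.filter p).card * x := by
  rw [← Multiset.filter_add_not p s]
  simp +contextual [Multiset.map_congr]

namespace Polynomial

variable {c : ℂ} {R : ℝ}

theorem circleIntegral_eval_derivative_div_eval (hR : 0 ≤ R) {q : ℂ[X]}
    (hq : ∀ z ∈ sphere c R, q.eval z ≠ 0) [DecidablePred (· ∈ ball c R)] :
    (∮ z in C(c, R), q.derivative.eval z / q.eval z) =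
      (q.roots.filter (· ∈ ball c R)).card * (2 * π * I) := by
  have hroots : ∀ w ∈ q.roots, w ∉ sphere c R := fun w hw hws =>
    hq w hws (isRoot_of_mem_roots hw)
  have hint : ∀ w ∈ q.roots, CircleIntegrable (fun z => (z - w)⁻¹) c R := fun w hw =>
    (continuousOn_id.sub continuousOn_const |>.inv₀ fun z hz =>
      sub_ne_zero.2 (ne_of_mem_of_not_mem hz (hroots w hw))).circleIntegrable hR
  calc (∮ z in C(c, R), q.derivative.eval z / q.eval z)
      = ∮ z in C(c, R), (q.roots.map fun w => (z - w)⁻¹).sum :=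
        circleIntegral.integral_congr hR fun z hz => by
          simpa only [one_div] using
            (IsAlgClosed.splits q).eval_derivative_div_eval_of_ne_zero (hq z hz)
    _ = (q.roots.map fun w => ∮ z in C(c, R), (z - w)⁻¹).sum :=
        circleIntegral.integral_multiset_sum _ hint
    _ = (q.roots.map fun w => if w ∈ ball c R then 2 * π * I else 0).sum :=
        congrArg _ (Multiset.map_congr rfl fun w hw =>
          circleIntegral.integral_sub_inv_of_notMem_sphere hR (hroots w hw))
    _ = _ := Multiset.sum_map_ite_zero _ _ _

theorem circleIntegral_logDeriv_eq_of_norm_sub_lt (hR : 0 ≤ R) {p q : ℂ[X]}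
    (h : ∀ z ∈ sphere c R, ‖p.eval z - q.eval z‖ < ‖q.eval z‖) :
    (∮ z in C(c, R), p.derivative.eval z / p.eval z) =
      ∮ z in C(c, R), q.derivative.eval z / q.eval z := by
  have hp z (hz : z ∈ sphere c R) := (ne_zero_and_ne_zero_of_norm_sub_lt (h z hz)).1
  have hq z (hz : z ∈ sphere c R) := (ne_zero_and_ne_zero_of_norm_sub_lt (h z hz)).2
  -- `p / q` stays in the disc `ball 1 1`, where the principal logarithm is holomorphic.
  have hslit : ∀ z ∈ sphere c R, p.eval z / q.eval z ∈ slitPlane := fun z hz => by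
    refine ball_one_subset_slitPlane ?_
    rw [mem_ball, dist_eq_norm, div_sub_one (hq z hz), norm_div,
      div_lt_one (norm_pos_iff.2 (hq z hz))]
    exact h z hz
  have hderiv : ∀ z ∈ sphere c R, HasDerivWithinAt (fun z => log (p.eval z / q.eval z))
      (p.derivative.eval z / p.eval z - q.derivative.eval z / q.eval z) (sphere c R) z := by
    intro z hz
    refine (((p.hasDerivAt z).div (q.hasDerivAt z) (hq z hz)).clog
      (hslit z hz)).hasDerivWithinAt.congr_deriv ?_
    simp only [Pi.div_apply]
    field_simp [hp z hz, hq z hz]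
  have hint : ∀ r : ℂ[X], (∀ z ∈ sphere c R, r.eval z ≠ 0) →
      CircleIntegrable (fun z => r.derivative.eval z / r.eval z) c R := fun r hr =>
    (r.derivative.continuousOn.div r.continuousOn hr).circleIntegrable hR
  rw [← sub_eq_zero, ← circleIntegral.integral_sub (hint p hp) (hint q hq)]
  exact circleIntegral.integral_eq_zero_of_hasDerivWithinAt hR hderiv

theorem card_roots_filter_mem_ball_eq_of_norm_sub_lt (hR : 0 ≤ R) {p q : ℂ[X]}
    (h : ∀ z ∈ sphere c R, ‖p.eval z - q.eval z‖ < ‖q.eval z‖)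
    [DecidablePred (· ∈ ball c R)] :
    (p.roots.filter (· ∈ ball c R)).card = (q.roots.filter (· ∈ ball c R)).card := by
  have := circleIntegral_logDeriv_eq_of_norm_sub_lt hR h
  rw [circleIntegral_eval_derivative_div_eval hR fun z hz =>
      (ne_zero_and_ne_zero_of_norm_sub_lt (h z hz)).1,
    circleIntegral_eval_derivative_div_eval hR fun z hz =>
      (ne_zero_and_ne_zero_of_norm_sub_lt (h z hz)).2] at this
  exact_mod_cast mul_right_cancel₀ two_pi_I_ne_zero this

theorem norm_eval_sub_lt_of_dominant {s : Finset ℕ} {c : ℕ → ℂ} {j : ℕ} (hj : j ∈ s)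
    (hdom : ∑ k ∈ s.erase j, ‖c k‖ < ‖c j‖) {z : ℂ} (hz : ‖z‖ = 1) :
    ‖(∑ k ∈ s, C (c k) * X ^ k).eval z - (C (c j) * X ^ j).eval z‖ <
      ‖(C (c j) * X ^ j).eval z‖ := by
  rw [← Finset.add_sum_erase s _ hj]
  simp only [eval_add, eval_finsetSum, eval_C_mul, eval_X_pow, add_sub_cancel_left, norm_mul,
    norm_pow, hz, one_pow, mul_one]
  calc ‖∑ k ∈ s.erase j, c k * z ^ k‖ ≤ ∑ k ∈ s.erase j, ‖c k * z ^ k‖ := norm_sum_le _ _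
    _ = ∑ k ∈ s.erase j, ‖c k‖ := by simp [hz]
    _ < ‖c j‖ := hdom

theorem card_roots_filter_norm_lt_one_of_dominant {s : Finset ℕ} {c : ℕ → ℂ} {j : ℕ}
    (hj : j ∈ s) (hdom : ∑ k ∈ s.erase j, ‖c k‖ < ‖c j‖) :
    (∀ z : ℂ, ‖z‖ = 1 → (∑ k ∈ s, C (c k) * X ^ k).eval z ≠ 0) ∧
      ((∑ k ∈ s, C (c k) * X ^ k).roots.filter (fun z => ‖z‖ < 1)).card = j := by
  classical
  have hcj : c j ≠ 0 := fun h0 => by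
    simpa [h0] using (Finset.sum_nonneg fun k _ => norm_nonneg (c k)).trans_lt hdom
  have hclose : ∀ z ∈ sphere (0 : ℂ) 1,
      ‖(∑ k ∈ s, C (c k) * X ^ k).eval z - (C (c j) * X ^ j).eval z‖ <
        ‖(C (c j) * X ^ j).eval z‖ := fun z hz =>
    norm_eval_sub_lt_of_dominant hj hdom (mem_sphere_zero_iff_norm.1 hz)
  refine ⟨fun z hz h0 => ?_, ?_⟩
  · exact (ne_zero_and_ne_zero_of_norm_sub_lt (hclose z (mem_sphere_zero_iff_norm.2 hz))).1 h0
  · rw [Multiset.filter_congr fun z _ => (mem_ball_zero_iff (a := z) (r := 1)).symm,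
      card_roots_filter_mem_ball_eq_of_norm_sub_lt zero_le_one hclose, roots_C_mul_X_pow hcj,
      Multiset.filter_nsmul]
    simp [Multiset.filter_singleton]

theorem derivative_sum_range_C_mul_X_pow {R : Type*} [Semiring R] (n : ℕ) (a : ℕ → R) :
    derivative (∑ k ∈ range (n + 1), C (a k) * X ^ k) =
      ∑ k ∈ range n, C (a (k + 1) * (k + 1 : ℕ)) * X ^ k := by
  rw [derivative_sum, sum_range_succ']
  simp only [derivative_C_mul_X_pow, Nat.cast_zero, mul_zero, C_0, zero_mul, add_zero,
    Nat.add_sub_cancel]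

end Polynomial

theorem two_mul_sum_range_natCast_mul_of_symm {R : Type*} [CommSemiring R] (n : ℕ) {f : ℕ → R}
    (hf : ∀ k ≤ n, f (n - k) = f k) :
    2 * ∑ k ∈ range (n + 1), (k : R) * f k = n * ∑ k ∈ range (n + 1), f k := by
  have hreflect : ∑ k ∈ range (n + 1), (k : R) * f k =
      ∑ k ∈ range (n + 1), ((n - k : ℕ) : R) * f k := by
    rw [← sum_range_reflect]
    refine sum_congr rfl fun k hk => ?_
    have hk : k ≤ n := Nat.lt_succ_iff.1 (mem_range.1 hk)
    rw [Nat.add_sub_cancel, hf k hk]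
  rw [two_mul, mul_sum]
  nth_rewrite 2 [hreflect]
  rw [← sum_add_distrib]
  refine sum_congr rfl fun k hk => ?_
  rw [← add_mul, ← Nat.cast_add, Nat.add_sub_cancel' (Nat.lt_succ_iff.1 (mem_range.1 hk))]

theorem sum_range_eq_add_add_sum_filter_ne {M : Type*} [AddCommMonoid M] {n l : ℕ}
    (hl : 2 * l < n) (f : ℕ → M) :
    ∑ k ∈ range (n + 1), f k =
      f l + f (n - l) + ∑ k ∈ (range (n + 1)).filter (fun k => k ≠ l ∧ k ≠ n - l), f k := by
  rw [← sum_filter_not_add_sum_filter (range (n + 1)) (fun k => k ≠ l ∧ k ≠ n - l)]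
  have hpair : (range (n + 1)).filter (fun k => ¬(k ≠ l ∧ k ≠ n - l)) = {l, n - l} := by
    ext k
    simp only [mem_filter, mem_range, mem_insert, mem_singleton]
    omega
  rw [hpair, sum_pair (by omega)]

theorem sum_erase_norm_mul_succ_lt {n l : ℕ} {a : ℕ → ℂ}
    (hsym : ∀ k ≤ n, ‖a (n - k)‖ = ‖a k‖) (hl : 2 * l < n)
    (hineq : ‖a (n - l)‖ >
      (1 / 2) * ((n : ℝ) / ((n : ℝ) - 2 * l)) *
        ∑ k ∈ (range (n + 1)).filter (fun k => k ≠ l ∧ k ≠ n - l), ‖a k‖) :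
    ∑ k ∈ (range n).erase (n - l - 1), ‖a (k + 1) * (k + 1 : ℕ)‖ <
      ‖a (n - l - 1 + 1) * (n - l - 1 + 1 : ℕ)‖ := by
  set σ := ∑ k ∈ (range (n + 1)).filter (fun k => k ≠ l ∧ k ≠ n - l), ‖a k‖
  have hj : n - l - 1 + 1 = n - l := by omega
  have hgap : (0 : ℝ) < n - 2 * l := by
    rw [sub_pos]; exact_mod_cast hl
  have hkey : n * σ / 2 < (n - 2 * l) * ‖a (n - l)‖ := by
    have := mul_lt_mul_of_pos_left hineq hgap
    rwa [show ((n : ℝ) - 2 * l) * (1 / 2 * (n / (n - 2 * l)) * σ) = n * σ / 2 by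
      field_simp] at this
  have hweighted : ∑ k ∈ range n, ‖a (k + 1) * (k + 1 : ℕ)‖ =
      ∑ k ∈ range (n + 1), (k : ℝ) * ‖a k‖ := by
    rw [sum_range_succ' _ n]
    simp only [Nat.cast_zero, mul_zero, add_zero, norm_mul, Complex.norm_natCast, mul_comm]
  have hal : ‖a l‖ = ‖a (n - l)‖ := (hsym l (by omega)).symm
  have hhalf : 2 * ∑ k ∈ range (n + 1), (k : ℝ) * ‖a k‖ = 2 * n * ‖a (n - l)‖ + n * σ := by
    rw [two_mul_sum_range_natCast_mul_of_symm n (f := fun k => ‖a k‖) hsym,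
      sum_range_eq_add_add_sum_filter_ne hl fun k => ‖a k‖, hal]
    ring
  rw [sum_erase_eq_sub (mem_range.2 (by omega)), hweighted, hj, norm_mul, Complex.norm_natCast,
    Nat.cast_sub (by omega : l ≤ n)]
  linarith

theorem selfInversive_derivative_roots_general
    (n l : ℕ) (a : ℕ → ℂ) (ω : ℂ)
    (hω : ‖ω‖ = 1)
    (hsi : ∀ k ≤ n, a (n - k) = ω * (starRingEnd ℂ) (a k))
    (hl : 2 * l < n)
    (hineq : ‖a (n - l)‖ >
      (1 / 2) * ((n : ℝ) / ((n : ℝ) - 2 * l)) *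
        ∑ k ∈ (Finset.range (n + 1)).filter (fun k => k ≠ l ∧ k ≠ n - l),
          ‖a k‖) :
    (∀ z : ℂ, ‖z‖ = 1 →
        (Polynomial.derivative
          (∑ k ∈ Finset.range (n + 1), Polynomial.C (a k) * Polynomial.X ^ k)).eval z ≠ 0)
      ∧
    Multiset.card
      ((Polynomial.derivative
          (∑ k ∈ Finset.range (n + 1), Polynomial.C (a k) * Polynomial.X ^ k)).roots.filter
        (fun z => ‖z‖ < 1)) = n - l - 1 := by
  have hsym : ∀ k ≤ n, ‖a (n - k)‖ = ‖a k‖ := fun k hk => by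
    rw [hsi k hk, norm_mul, hω, one_mul, Complex.norm_conj]
  rw [derivative_sum_range_C_mul_X_pow]
  exact card_roots_filter_norm_lt_one_of_dominant (c := fun k => a (k + 1) * (k + 1 : ℕ))
    (mem_range.2 (by omega)) (sum_erase_norm_mul_succ_lt hsym hl hineq)

/-- If a self-inversive polynomial `p(z) = a₀ + a₁ z + ⋯ + aₙ zⁿ` of degree `n`
satisfies `|a_{n-l}| > (1/2)·(n/(n-2l))·∑_{k ≠ l, n-l} |a_k|` with `2l < n`, then its
formal derivative `p'` has no roots on the complex unit circle and has exactly
`n - l - 1` roots, counted with multiplicity, in the open unit disk. -/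
theorem selfInversive_derivative_roots
    (n l : ℕ) (a : ℕ → ℂ) (ω : ℂ)
    (hω : ‖ω‖ = 1)
    (han : a n ≠ 0)
    (hsi : ∀ k ≤ n, a (n - k) = ω * (starRingEnd ℂ) (a k))
    (hl : 2 * l < n)
    (hineq : ‖a (n - l)‖ >
      (1 / 2) * ((n : ℝ) / ((n : ℝ) - 2 * l)) *
        ∑ k ∈ (Finset.range (n + 1)).filter (fun k => k ≠ l ∧ k ≠ n - l),
          ‖a k‖) :
    (∀ z : ℂ, ‖z‖ = 1 →
        (Polynomial.derivative
          (∑ k ∈ Finset.range (n + 1), Polynomial.C (a k) * Polynomial.X ^ k)).eval z ≠ 0)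
      ∧
    Multiset.card
      ((Polynomial.derivative
          (∑ k ∈ Finset.range (n + 1), Polynomial.C (a k) * Polynomial.X ^ k)).roots.filter
        (fun z => ‖z‖ < 1)) = n - l - 1 :=
  selfInversive_derivative_roots_general n l a ω hω hsi hl hineq
end

section
/- Let n ≥ 1, let a be an integer with 1 ≤ a ≤ n, let ω_a = e^{2πia/n} with ω_a ≠ −1, and let Δ be a real number. Define P_a(z) = (ω_a+1)z^n − 2ω_aΔ·z^{n−1} − 2Δ·z + (ω_a+1). If |Δ| < |ω_a + 1|/2, then all n roots of P_a lie on the complex unit circle U and all of them are simple. -/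
/-!
Write `ω = e^{iφ}` and `z = e^{iθ}`. Two applications of sum-to-product give
`P(z) = 4 e^{i(φ+nθ)/2} F(θ)` with the real function
`F(θ) = cos(φ/2) cos(nθ/2) - Δ cos((φ + (n-2)θ)/2)`.
At `θ = 2πk/n` the first term is `(-1)^k cos(φ/2)`, and it dominates the second because
`|Δ| < |ω + 1|/2 = |cos(φ/2)|`. So `F` changes sign on each of the `n` intervals
`(2πk/n, 2π(k+1)/n)`, giving `n` distinct roots of `P` on the unit circle; as `P` has
degree at most `n`, these are all of its roots, and each is simple.
-/

open Polynomial Complex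

noncomputable def bethePoly (n : ℕ) (ω : ℂ) (Δ : ℝ) : ℂ[X] :=
  C (ω + 1) * X ^ n - C (2 * ω * (Δ : ℂ)) * X ^ (n - 1) - C (2 * (Δ : ℂ)) * X + C (ω + 1)

lemma natDegree_bethePoly_le {n : ℕ} (hn : 1 ≤ n) (ω : ℂ) (Δ : ℝ) :
    (bethePoly n ω Δ).natDegree ≤ n := by
  unfold bethePoly
  compute_degree
  omega

lemma exp_mul_I_add_exp_mul_I (u v : ℝ) :
    cexp (u * I) + cexp (v * I) = 2 * Real.cos ((u - v) / 2) * cexp (↑((u + v) / 2) * I) := by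
  rw [ofReal_cos, two_cos, add_mul, ← exp_add, ← exp_add]
  congr 2 <;> push_cast <;> ring

lemma exp_mul_I_add_one (u : ℝ) :
    cexp (u * I) + 1 = 2 * Real.cos (u / 2) * cexp (↑(u / 2) * I) := by
  simpa using exp_mul_I_add_exp_mul_I u 0

lemma norm_exp_mul_I_add_one (φ : ℝ) : ‖cexp (φ * I) + 1‖ = 2 * |Real.cos (φ / 2)| := by
  rw [exp_mul_I_add_one, norm_mul, norm_mul, Complex.norm_two, norm_exp_ofReal_mul_I, norm_real,
    Real.norm_eq_abs, mul_one]

noncomputable def betheCos (n : ℕ) (φ Δ θ : ℝ) : ℝ :=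
  Real.cos (φ / 2) * Real.cos (n * θ / 2) - Δ * Real.cos ((φ + (n - 2) * θ) / 2)

lemma eval_bethePoly_exp_mul_I {n : ℕ} (hn : 1 ≤ n) (φ Δ θ : ℝ) :
    (bethePoly n (cexp (φ * I)) Δ).eval (cexp (θ * I))
      = 4 * cexp (↑((φ + n * θ) / 2) * I) * betheCos n φ Δ θ := by
  have hpow (m : ℕ) : cexp (θ * I) ^ m = cexp (↑(m * θ) * I) := by
    rw [← Complex.exp_nat_mul]; push_cast; ring_nf
  have hω := exp_mul_I_add_one φ
  have hzn := exp_mul_I_add_one (n * θ)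
  rw [← hpow] at hzn
  have hmid := exp_mul_I_add_exp_mul_I (φ + (n - 1) * θ) θ
  have hphase : cexp (↑(φ / 2) * I) * cexp (↑(n * θ / 2) * I)
      = cexp (↑((φ + n * θ) / 2) * I) := by
    rw [← exp_add]; push_cast; ring_nf
  have hsplit : cexp (↑(φ + (n - 1) * θ) * I) = cexp (φ * I) * cexp (θ * I) ^ (n - 1) := by
    rw [hpow, ← exp_add, Nat.cast_sub hn]; push_cast; ring_nf
  rw [hsplit, show (φ + (n - 1) * θ - θ) / 2 = (φ + (n - 2) * θ) / 2 by ring,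
    show (φ + (n - 1) * θ + θ) / 2 = (φ + n * θ) / 2 by ring] at hmid
  simp only [bethePoly, eval_add, eval_sub, eval_mul, eval_C, eval_pow, eval_X, betheCos,
    ofReal_sub, ofReal_mul]
  linear_combination (cexp (θ * I) ^ n + 1) * hω
    + 2 * Real.cos (φ / 2) * cexp (↑(φ / 2) * I) * hzn - 2 * (Δ : ℂ) * hmid
    + 4 * Real.cos (φ / 2) * Real.cos (n * θ / 2) * hphase

lemma mul_neg_of_abs_sub_lt_of_abs_add_lt {x y t : ℝ} (hx : |x - t| < |t|)
    (hy : |y + t| < |t|) : x * y < 0 := by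
  rw [abs_lt] at hx hy
  rcases abs_cases t with ⟨ht, _⟩ | ⟨ht, _⟩ <;> nlinarith

lemma exists_mem_Ioo_eq_zero_of_mul_neg {f : ℝ → ℝ} {a b : ℝ} (hab : a ≤ b)
    (hf : ContinuousOn f (Set.Icc a b)) (h : f a * f b < 0) : ∃ x ∈ Set.Ioo a b, f x = 0 := by
  rcases mul_neg_iff.1 h with ⟨ha, hb⟩ | ⟨ha, hb⟩
  · exact intermediate_value_Ioo' hab hf ⟨hb, ha⟩
  · exact intermediate_value_Ioo hab hf ⟨ha, hb⟩

section

open Real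

variable {n : ℕ} {φ Δ : ℝ}

lemma betheCos_two_pi_mul_div (hn : n ≠ 0) (k : ℕ) :
    betheCos n φ Δ (2 * π * k / n)
      = (-1) ^ k * Real.cos (φ / 2) - Δ * Real.cos ((φ + (n - 2) * (2 * π * k / n)) / 2) := by
  have hhalf : n * (2 * π * k / n) / 2 = k * π := by field_simp
  rw [betheCos, hhalf, Real.cos_nat_mul_pi, mul_comm]

lemma betheCos_mul_betheCos_succ_neg (hn : n ≠ 0) (hΔ : |Δ| < |Real.cos (φ / 2)|) (k : ℕ) :
    betheCos n φ Δ (2 * π * k / n) * betheCos n φ Δ (2 * π * (k + 1) / n) < 0 := by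
  have hsmall (x : ℝ) : |-(Δ * Real.cos x)| < |(-1) ^ k * Real.cos (φ / 2)| := by
    rw [abs_neg, abs_mul, abs_mul, abs_pow, abs_neg, abs_one, one_pow, one_mul]
    exact (mul_le_of_le_one_right (abs_nonneg Δ) (Real.abs_cos_le_one x)).trans_lt hΔ
  apply mul_neg_of_abs_sub_lt_of_abs_add_lt (t := (-1) ^ k * Real.cos (φ / 2))
  · rw [betheCos_two_pi_mul_div hn]
    convert hsmall ((φ + (n - 2) * (2 * π * k / n)) / 2) using 2
    ring
  · rw [← Nat.cast_succ, betheCos_two_pi_mul_div hn, pow_succ]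
    convert hsmall ((φ + (n - 2) * (2 * π * ↑(k + 1) / n)) / 2) using 2
    ring

lemma exists_betheCos_eq_zero (hn : n ≠ 0) (hΔ : |Δ| < |Real.cos (φ / 2)|) (k : ℕ) :
    ∃ θ ∈ Set.Ioo (2 * π * k / n) (2 * π * (k + 1) / n), betheCos n φ Δ θ = 0 := by
  refine exists_mem_Ioo_eq_zero_of_mul_neg ?_ (by unfold betheCos; fun_prop)
    (betheCos_mul_betheCos_succ_neg hn hΔ k)
  gcongr
  linarith

lemma bethePoly_ne_zero (hn : 1 ≤ n) (hc : |Δ| < |Real.cos (φ / 2)|) :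
    bethePoly n (cexp (φ * I)) Δ ≠ 0 := by
  intro h
  have h1 := eval_bethePoly_exp_mul_I hn φ Δ 0
  have h0 : betheCos n φ Δ 0 ≠ 0 := by
    simpa using left_ne_zero_of_mul (betheCos_mul_betheCos_succ_neg (by omega) hc 0).ne
  simp [h, h0, Complex.exp_ne_zero] at h1

lemma exists_roots_bethePoly_eq (hn : 1 ≤ n) (hc : |Δ| < |Real.cos (φ / 2)|) :
    ∃ s : Finset ℂ, (∀ z ∈ s, ‖z‖ = 1) ∧ (bethePoly n (cexp (φ * I)) Δ).roots = s.val := by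
  choose θ hθ hzero using exists_betheCos_eq_zero (n := n) (by omega) hc
  have hθmono : StrictMono θ := strictMono_nat_of_lt_succ fun k =>
    (hθ k).2.trans (by simpa using (hθ (k + 1)).1)
  have hθmem (k : ℕ) (hk : k < n) : θ k ∈ Set.Ico 0 (2 * π) := by
    refine ⟨le_trans (by positivity) (hθ k).1.le, (hθ k).2.trans_le ?_⟩
    rw [div_le_iff₀ (by positivity)]
    gcongr
    exact_mod_cast hk
  have hinj : Set.InjOn (fun k => cexp (θ k * I)) (Finset.range n) := fun j hj k hk h =>
    hθmono.injective <| Circle.exp_injOn_Ico (by rw [sub_zero])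
      (hθmem j (Finset.mem_range.1 hj)) (hθmem k (Finset.mem_range.1 hk)) (Circle.ext h)
  refine ⟨(Finset.range n).image fun k => cexp (θ k * I), by simp [norm_exp_ofReal_mul_I],
    roots_eq_of_natDegree_le_card_of_ne_zero ?_ ?_ (bethePoly_ne_zero hn hc)⟩
  · simp [eval_bethePoly_exp_mul_I hn, hzero]
  · rw [Finset.card_image_of_injOn hinj, Finset.card_range]
    exact natDegree_bethePoly_le hn _ _

theorem norm_eq_one_and_rootMultiplicity_eq_one_of_isRoot_bethePoly (hn : 1 ≤ n)
    (hΔ : |Δ| < ‖cexp (φ * I) + 1‖ / 2) {z : ℂ}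
    (hz : (bethePoly n (cexp (φ * I)) Δ).IsRoot z) :
    ‖z‖ = 1 ∧ rootMultiplicity z (bethePoly n (cexp (φ * I)) Δ) = 1 := by
  have hc : |Δ| < |Real.cos (φ / 2)| := by rw [norm_exp_mul_I_add_one] at hΔ; linarith
  obtain ⟨s, hs, hroots⟩ := exists_roots_bethePoly_eq hn hc
  have hzs : z ∈ s := by
    rwa [← Finset.mem_val, ← hroots, mem_roots (bethePoly_ne_zero hn hc)]
  exact ⟨hs z hzs, by rw [← count_roots, hroots, Multiset.count_eq_one_of_mem s.nodup hzs]⟩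

end

theorem bethe_polynomial_all_roots_on_circle_general
    (n : ℕ) (hn : 1 ≤ n) (a : ℕ)
    (Δ : ℝ)
    (hΔ : |Δ| < ‖Complex.exp (2 * Real.pi * Complex.I * a / n) + 1‖ / 2) :
    ∀ z : ℂ,
      (Polynomial.C (Complex.exp (2 * Real.pi * Complex.I * a / n) + 1) * Polynomial.X ^ n
        - Polynomial.C (2 * Complex.exp (2 * Real.pi * Complex.I * a / n) * (Δ : ℂ)) *
            Polynomial.X ^ (n - 1)
        - Polynomial.C (2 * (Δ : ℂ)) * Polynomial.X
        + Polynomial.C (Complex.exp (2 * Real.pi * Complex.I * a / n) + 1)).eval z = 0 →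
      ‖z‖ = 1 ∧
        Polynomial.rootMultiplicity z
          (Polynomial.C (Complex.exp (2 * Real.pi * Complex.I * a / n) + 1) * Polynomial.X ^ n
            - Polynomial.C (2 * Complex.exp (2 * Real.pi * Complex.I * a / n) * (Δ : ℂ)) *
                Polynomial.X ^ (n - 1)
            - Polynomial.C (2 * (Δ : ℂ)) * Polynomial.X
            + Polynomial.C (Complex.exp (2 * Real.pi * Complex.I * a / n) + 1)) = 1 := by
  have hω : cexp (2 * Real.pi * I * a / n) = cexp (↑(2 * Real.pi * a / n) * I) := by
    push_cast; ring_nf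
  rw [hω] at hΔ ⊢
  exact fun z hz => norm_eq_one_and_rootMultiplicity_eq_one_of_isRoot_bethePoly hn hΔ hz

/-- For `ωₐ = e^{2πia/n}` with `ωₐ ≠ −1` and `Δ` real, if `|Δ| < |ωₐ + 1|/2` then all
`n` roots of `Pₐ(z) = (ωₐ+1)zⁿ − 2ωₐΔ z^{n−1} − 2Δ z + (ωₐ+1)` lie on the complex unit
circle and all of them are simple. -/
theorem bethe_polynomial_all_roots_on_circle
    (n : ℕ) (hn : 1 ≤ n) (a : ℕ) (ha : 1 ≤ a) (han : a ≤ n)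
    (Δ : ℝ)
    (hωa : Complex.exp (2 * Real.pi * Complex.I * a / n) ≠ -1)
    (hΔ : |Δ| < ‖Complex.exp (2 * Real.pi * Complex.I * a / n) + 1‖ / 2) :
    ∀ z : ℂ,
      (Polynomial.C (Complex.exp (2 * Real.pi * Complex.I * a / n) + 1) * Polynomial.X ^ n
        - Polynomial.C (2 * Complex.exp (2 * Real.pi * Complex.I * a / n) * (Δ : ℂ)) *
            Polynomial.X ^ (n - 1)
        - Polynomial.C (2 * (Δ : ℂ)) * Polynomial.X
        + Polynomial.C (Complex.exp (2 * Real.pi * Complex.I * a / n) + 1)).eval z = 0 →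
      ‖z‖ = 1 ∧
        Polynomial.rootMultiplicity z
          (Polynomial.C (Complex.exp (2 * Real.pi * Complex.I * a / n) + 1) * Polynomial.X ^ n
            - Polynomial.C (2 * Complex.exp (2 * Real.pi * Complex.I * a / n) * (Δ : ℂ)) *
                Polynomial.X ^ (n - 1)
            - Polynomial.C (2 * (Δ : ℂ)) * Polynomial.X
            + Polynomial.C (Complex.exp (2 * Real.pi * Complex.I * a / n) + 1)) = 1 :=
  bethe_polynomial_all_roots_on_circle_general n hn a Δ hΔ
end
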